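/- Suppose the negated loss is (ν², α)-sub-Gamma under P_W ⊗ μ for some ν, α > 0, i.e. log ∫ exp(λ·(∫ ℓ d(P_W ⊗ μ) − ℓ)) d(P_W ⊗ μ) ≤ ν²λ²/(2(1 − αλ)) for every λ with 0 < λ < 1/α. Then gen ≤ (1/n) ∑_{i=1}^n ( √(2ν²·I(W;Z_i)) + α·I(W;Z_i) ). -/

import Mathlib

/-!
For each `i`, the Donsker–Varadhan inequality for `P_i` against `P_W ⊗ μ`, applied to
`λ (E ℓ - ℓ)`, bounds `λ (E_{P_W ⊗ μ} ℓ - E_{P_i} ℓ)` by `I(W;Z_i)` plus the sub-Gamma cumulant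
bound `ν²λ² / (2(1 - αλ))`. Optimizing over `λ ∈ (0, 1/α)` gives `√(2ν² I) + α I`, and `gen` is
the average over `i` of these differences.
-/

open MeasureTheory Real

/-- Real-valued Kullback–Leibler divergence `D(P‖Q)`,
the integral of the log-likelihood ratio with respect to `P`. -/
noncomputable def klReal {α : Type*} [MeasurableSpace α] (P Q : Measure α) : ℝ :=
  ∫ x, llr P Q x ∂P

variable {W Z : Type*} [MeasurableSpace W] [MeasurableSpace Z]

/-- Population risk `L(w) = ∫ ℓ(w,z) dμ(z)`. -/
noncomputable def popRisk (μ : Measure Z) (ℓ : W × Z → ℝ) (w : W) : ℝ :=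
  ∫ z, ℓ (w, z) ∂μ

/-- Empirical risk `L̂(w,s) = (1/n) ∑ i, ℓ(w, s i)`. -/
noncomputable def empRisk (n : ℕ) (ℓ : W × Z → ℝ) (w : W) (s : Fin n → Z) : ℝ :=
  (1 / (n : ℝ)) * ∑ i, ℓ (w, s i)

/-- Expected generalization error `gen = E_P[L(W) − L̂(W,S_n)]`. -/
noncomputable def genErr (μ : Measure Z) (n : ℕ) (P : Measure (W × (Fin n → Z)))
    (ℓ : W × Z → ℝ) : ℝ :=
  ∫ p, (popRisk μ ℓ p.1 - empRisk n ℓ p.1 p.2) ∂P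

/-- Expected empirical excess risk `R̂ = E_P[L̂(W,S_n) − L̂(w*,S_n)]`. -/
noncomputable def empExcess (n : ℕ) (P : Measure (W × (Fin n → Z)))
    (ℓ : W × Z → ℝ) (wstar : W) : ℝ :=
  ∫ p, (empRisk n ℓ p.1 p.2 - empRisk n ℓ wstar p.2) ∂P

/-- Expected excess risk `R = ∫ r d(P_W ⊗ μ)` where `r(w,z) = ℓ(w,z) − ℓ(w*,z)`. -/
noncomputable def excessRisk (μ : Measure Z) {n : ℕ} (P : Measure (W × (Fin n → Z)))
    (ℓ : W × Z → ℝ) (wstar : W) : ℝ :=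
  ∫ p, (ℓ p - ℓ (wstar, p.2)) ∂((P.map Prod.fst).prod μ)

/-- Joint law `P_i` of `(W, Z_i)`: the pushforward of `P` under `(w,z) ↦ (w, z_i)`. -/
noncomputable def jointLaw {n : ℕ} (P : Measure (W × (Fin n → Z))) (i : Fin n) :
    Measure (W × Z) :=
  P.map fun p => (p.1, p.2 i)

/-- Mutual information `I(W;Z_i) = D(P_i ‖ P_W ⊗ μ)`. -/
noncomputable def mutInfo (μ : Measure Z) {n : ℕ} (P : Measure (W × (Fin n → Z)))
    (i : Fin n) : ℝ :=
  klReal (jointLaw P i) ((P.map Prod.fst).prod μ)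

section Optimization

variable {ν α I x : ℝ}

/-- Substituting `λ = t / (1 + α t)` turns the sub-Gamma bound into one over all `t > 0`. -/
lemma le_add_div_add_of_forall_mul_le (hα : 0 < α)
    (h : ∀ lam : ℝ, 0 < lam → lam < 1 / α →
      lam * x ≤ I + ν ^ 2 * lam ^ 2 / (2 * (1 - α * lam)))
    {t : ℝ} (ht : 0 < t) :
    x ≤ α * I + I / t + ν ^ 2 * t / 2 := by
  have hd : 0 < 1 + α * t := by positivity
  have hlam : t / (1 + α * t) < 1 / α := by
    rw [div_lt_div_iff₀ hd hα]; linarith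
  have key := h (t / (1 + α * t)) (by positivity) hlam
  have hden : 1 - α * (t / (1 + α * t)) = 1 / (1 + α * t) := by field_simp; ring
  rw [hden] at key
  have key' : t * x ≤ I * (1 + α * t) + ν ^ 2 * t ^ 2 / 2 := by
    field_simp at key
    nlinarith
  rw [← mul_le_mul_iff_of_pos_left ht]
  field_simp
  nlinarith

lemma le_sqrt_of_forall_le_div_add (hν : 0 < ν) (hI : 0 ≤ I)
    (h : ∀ t : ℝ, 0 < t → x ≤ I / t + ν ^ 2 * t / 2) :
    x ≤ √(2 * ν ^ 2 * I) := by
  rcases hI.eq_or_lt with rfl | hI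
  · simp only [mul_zero, sqrt_zero]
    refine le_of_forall_pos_le_add fun ε hε => ?_
    have hε' : 0 / (2 * ε / ν ^ 2) + ν ^ 2 * (2 * ε / ν ^ 2) / 2 = 0 + ε := by
      field_simp; ring
    exact hε' ▸ h (2 * ε / ν ^ 2) (by positivity)
  · set s := √(2 * I)
    have hs : 0 < s := sqrt_pos.mpr (by linarith)
    have hs2 : s ^ 2 = 2 * I := sq_sqrt (by linarith)
    have hsqrt : √(2 * ν ^ 2 * I) = ν * s := by
      rw [show 2 * ν ^ 2 * I = ν ^ 2 * (2 * I) by ring, sqrt_mul (sq_nonneg ν), sqrt_sq hν.le]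
    rw [hsqrt]
    -- `s / ν` minimizes `I / t + ν² t / 2`
    have := h (s / ν) (by positivity)
    convert this using 1
    field_simp
    nlinarith

end Optimization

section KullbackLeibler

variable {Ω : Type*} [MeasurableSpace Ω] {P Q : Measure Ω}
  [IsProbabilityMeasure P] [IsProbabilityMeasure Q]

lemma klReal_nonneg (hPQ : P ≪ Q) (hllr : Integrable (llr P Q) P) : 0 ≤ klReal P Q := by
  simpa [klReal] using InformationTheory.integral_llr_add_sub_measure_univ_nonneg hPQ hllr

/-- Donsker–Varadhan: this is Gibbs' inequality for `P` against the tilted measure `Q.tilted f`. -/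
lemma integral_le_klReal_add_log_integral_exp (hPQ : P ≪ Q) (hllr : Integrable (llr P Q) P)
    {f : Ω → ℝ} (hfP : Integrable f P) (hfQ : Integrable (fun x => exp (f x)) Q) :
    ∫ x, f x ∂P ≤ klReal P Q + log (∫ x, exp (f x) ∂Q) := by
  have := isProbabilityMeasure_tilted hfQ
  have hgibbs := InformationTheory.integral_llr_add_sub_measure_univ_nonneg
    (hPQ.trans (absolutelyContinuous_tilted hfQ)) (integrable_llr_tilted_right hPQ hfP hllr hfQ)
  rw [integral_llr_tilted_right hPQ hfP hfQ hllr] at hgibbs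
  simp only [probReal_univ] at hgibbs
  rw [klReal]
  linarith

theorem integral_sub_integral_le_of_subGamma (hPQ : P ≪ Q) (hllr : Integrable (llr P Q) P)
    {ℓ : Ω → ℝ} (hℓ : Integrable ℓ P) (hν : 0 < ν) (hα : 0 < α)
    (hsubInt : ∀ lam : ℝ, 0 < lam → lam < 1 / α →
      Integrable (fun p => exp (lam * ((∫ q, ℓ q ∂Q) - ℓ p))) Q)
    (hsub : ∀ lam : ℝ, 0 < lam → lam < 1 / α →
      log (∫ p, exp (lam * ((∫ q, ℓ q ∂Q) - ℓ p)) ∂Q) ≤ ν ^ 2 * lam ^ 2 / (2 * (1 - α * lam))) :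
    (∫ q, ℓ q ∂Q) - ∫ q, ℓ q ∂P ≤ √(2 * ν ^ 2 * klReal P Q) + α * klReal P Q := by
  set m := ∫ q, ℓ q ∂Q
  have hdv : ∀ lam : ℝ, 0 < lam → lam < 1 / α →
      lam * (m - ∫ q, ℓ q ∂P) ≤ klReal P Q + ν ^ 2 * lam ^ 2 / (2 * (1 - α * lam)) := by
    intro lam hl0 hl1
    have := integral_le_klReal_add_log_integral_exp hPQ hllr (f := fun p => lam * (m - ℓ p))
      (((integrable_const m).sub hℓ).const_mul lam) (hsubInt lam hl0 hl1)
    rw [integral_const_mul, integral_sub (integrable_const m) hℓ, integral_const,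
      probReal_univ, one_smul] at this
    linarith [hsub lam hl0 hl1]
  have hopt := le_sqrt_of_forall_le_div_add (x := m - ∫ q, ℓ q ∂P - α * klReal P Q) hν
    (klReal_nonneg hPQ hllr) fun t ht => by
      linarith [le_add_div_add_of_forall_mul_le hα hdv ht]
  linarith

end KullbackLeibler

section Risk

variable {n : ℕ} {P : Measure (W × (Fin n → Z))} {ℓ : W × Z → ℝ}

lemma measurable_pair_coord (i : Fin n) :
    Measurable fun p : W × (Fin n → Z) => (p.1, p.2 i) := by
  fun_prop

lemma integrable_comp_pair_coord {i : Fin n} (hi : Integrable ℓ (jointLaw P i)) :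
    Integrable (fun p : W × (Fin n → Z) => ℓ (p.1, p.2 i)) P :=
  hi.comp_aemeasurable (measurable_pair_coord i).aemeasurable

instance isProbabilityMeasure_jointLaw [IsProbabilityMeasure P] (i : Fin n) : IsProbabilityMeasure (jointLaw P i) :=
  Measure.isProbabilityMeasure_map (measurable_pair_coord i).aemeasurable

lemma integral_popRisk [IsFiniteMeasure P] {μ : Measure Z} [SFinite μ]
    (hint : Integrable ℓ ((P.map Prod.fst).prod μ)) :
    ∫ p, popRisk μ ℓ p.1 ∂P = ∫ q, ℓ q ∂((P.map Prod.fst).prod μ) := by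
  rw [integral_prod _ hint, integral_map measurable_fst.aemeasurable
    hint.integral_prod_left.aestronglyMeasurable]
  rfl

lemma integral_empRisk (hinti : ∀ i, Integrable ℓ (jointLaw P i)) :
    ∫ p, empRisk n ℓ p.1 p.2 ∂P = (1 / (n : ℝ)) * ∑ i, ∫ q, ℓ q ∂(jointLaw P i) := by
  simp only [empRisk]
  rw [integral_const_mul, integral_finsetSum _ fun i _ => integrable_comp_pair_coord (hinti i)]
  congr 1
  refine Finset.sum_congr rfl fun i _ => ?_
  rw [jointLaw, integral_map (measurable_pair_coord i).aemeasurable (hinti i).1]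

lemma genErr_eq [IsFiniteMeasure P] {μ : Measure Z} [SFinite μ] (hn : 0 < n)
    (hint : Integrable ℓ ((P.map Prod.fst).prod μ)) (hinti : ∀ i, Integrable ℓ (jointLaw P i)) :
    genErr μ n P ℓ = (1 / (n : ℝ)) *
      ∑ i, ((∫ q, ℓ q ∂((P.map Prod.fst).prod μ)) - ∫ q, ℓ q ∂(jointLaw P i)) := by
  have hpop : Integrable (fun p : W × (Fin n → Z) => popRisk μ ℓ p.1) P :=
    hint.integral_prod_left.comp_aemeasurable measurable_fst.aemeasurable
  have hemp : Integrable (fun p : W × (Fin n → Z) => empRisk n ℓ p.1 p.2) P :=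
    (integrable_finsetSum _ fun i _ => integrable_comp_pair_coord (hinti i)).const_mul _
  rw [genErr, integral_sub hpop hemp, integral_popRisk hint, integral_empRisk hinti,
    Finset.sum_sub_distrib, Finset.sum_const, Finset.card_univ, Fintype.card_fin, nsmul_eq_mul]
  field_simp

end Risk

theorem subGamma_loss_bound_general
    (μ : Measure Z) [IsProbabilityMeasure μ] (n : ℕ) (hn : 0 < n)
    (P : Measure (W × (Fin n → Z))) [IsProbabilityMeasure P]
    (ℓ : W × Z → ℝ)
    (hint : Integrable ℓ ((P.map Prod.fst).prod μ))
    (hinti : ∀ i : Fin n, Integrable ℓ (jointLaw P i))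
    (hac : ∀ i : Fin n, jointLaw P i ≪ (P.map Prod.fst).prod μ)
    (hIfin : ∀ i : Fin n, Integrable (llr (jointLaw P i) ((P.map Prod.fst).prod μ))
      (jointLaw P i))
    (ν α : ℝ) (hν : 0 < ν) (hα : 0 < α)
    (hsubInt : ∀ lam : ℝ, 0 < lam → lam < 1 / α →
      Integrable
        (fun p => Real.exp (lam * ((∫ q, ℓ q ∂((P.map Prod.fst).prod μ)) - ℓ p)))
        ((P.map Prod.fst).prod μ))
    (hsub : ∀ lam : ℝ, 0 < lam → lam < 1 / α →
      Real.log (∫ p, Real.exp (lam * ((∫ q, ℓ q ∂((P.map Prod.fst).prod μ)) - ℓ p))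
          ∂((P.map Prod.fst).prod μ)) ≤ ν ^ 2 * lam ^ 2 / (2 * (1 - α * lam))) :
    genErr μ n P ℓ ≤
      (1 / (n : ℝ)) * ∑ i : Fin n,
        (Real.sqrt (2 * ν ^ 2 * mutInfo μ P i) + α * mutInfo μ P i) := by
  have : IsProbabilityMeasure (P.map Prod.fst) :=
    Measure.isProbabilityMeasure_map measurable_fst.aemeasurable
  rw [genErr_eq hn hint hinti]
  gcongr with i
  exact integral_sub_integral_le_of_subGamma (hac i) (hIfin i) (hinti i) hν hα hsubInt hsub

theorem subGamma_loss_bound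
    (μ : Measure Z) [IsProbabilityMeasure μ] (n : ℕ) (hn : 0 < n)
    (P : Measure (W × (Fin n → Z))) [IsProbabilityMeasure P]
    (hmarg : P.map Prod.snd = Measure.pi fun _ : Fin n => μ)
    (ℓ : W × Z → ℝ) (hℓ : Measurable ℓ) (wstar : W)
    (hint : Integrable ℓ ((P.map Prod.fst).prod μ))
    (hinti : ∀ i : Fin n, Integrable ℓ (jointLaw P i))
    (hintw : Integrable (fun z => ℓ (wstar, z)) μ)
    (hac : ∀ i : Fin n, jointLaw P i ≪ (P.map Prod.fst).prod μ)
    (hIfin : ∀ i : Fin n, Integrable (llr (jointLaw P i) ((P.map Prod.fst).prod μ))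
      (jointLaw P i))
    (ν α : ℝ) (hν : 0 < ν) (hα : 0 < α)
    (hsubInt : ∀ lam : ℝ, 0 < lam → lam < 1 / α →
      Integrable
        (fun p => Real.exp (lam * ((∫ q, ℓ q ∂((P.map Prod.fst).prod μ)) - ℓ p)))
        ((P.map Prod.fst).prod μ))
    (hsub : ∀ lam : ℝ, 0 < lam → lam < 1 / α →
      Real.log (∫ p, Real.exp (lam * ((∫ q, ℓ q ∂((P.map Prod.fst).prod μ)) - ℓ p))
          ∂((P.map Prod.fst).prod μ)) ≤ ν ^ 2 * lam ^ 2 / (2 * (1 - α * lam))) :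
    genErr μ n P ℓ ≤
      (1 / (n : ℝ)) * ∑ i : Fin n,
        (Real.sqrt (2 * ν ^ 2 * mutInfo μ P i) + α * mutInfo μ P i) :=
  subGamma_loss_bound_general μ n hn P ℓ hint hinti hac hIfin ν α hν hα hsubInt hsub
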